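/- arXiv:1201.1521 — 2 statements merged into one kernel-verified Lean document; each statement's English description precedes it below -/
import Mathlib

section
/- Let s ≥ 1 and let T be the channel with input alphabet {0,1,…,2^s−1} and output alphabet {1,…,2^s−1}×{0,1} defined by T((j,t)|i) = (2^s−1)^{-1}·[b_i·b_j = t], where b_i ∈ F_2^s is the binary representation of i. Then Succ_NS(T) = 1; that is, with non-signaling assistance a single bit can be sent across T with certainty, and T achieves equality in the bound Succ_NS(N) − 1/2 ≤ (2 − 2/r)·(Succ(N) − 1/2) with r = 2^s. -/
open scoped Matrix Kronecker BigOperators Matrix.Norms.L2Operator ComplexOrder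
open Matrix Finset

noncomputable section

/-- A classical channel: `N x y` is the probability of output `y` given input `x`. -/
def IsChannel {X Y : Type*} [Fintype Y] (N : X → Y → ℝ) : Prop :=
  (∀ x y, 0 ≤ N x y) ∧ ∀ x, ∑ y, N x y = 1

/-- The unassisted one-shot success probability of a channel. -/
def Succ {X Y : Type*} [Fintype X] [Fintype Y] [Nonempty X]
    (N : X → Y → ℝ) : ℝ :=
  ⨆ z : X × X × (Y → Bool),
    (1 / 2) * (∑ y, if z.2.2 y = false then N z.1 y else 0) +
      (1 / 2) * (∑ y, if z.2.2 y = true then N z.2.1 y else 0)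

/-- A two-part input-output correlation: `D r s p q` is the probability of
outputs `(p, q)` given inputs `(r, s)`. -/
def IsCorrelation {R S P Q : Type*} [Fintype P] [Fintype Q]
    (D : R → S → P → Q → ℝ) : Prop :=
  (∀ r s p q, 0 ≤ D r s p q) ∧ ∀ r s, ∑ p, ∑ q, D r s p q = 1

/-- The non-signaling condition for a two-part correlation. -/
def NonSignaling {R S P Q : Type*} [Fintype P] [Fintype Q]
    (D : R → S → P → Q → ℝ) : Prop :=
  (∀ r p s s', ∑ q, D r s p q = ∑ q, D r s' p q) ∧
    ∀ s q r r', ∑ p, D r s p q = ∑ p, D r' s p q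

/-- `SuccD N D` : the optimal success probability for transmitting one bit
across the channel `N` with the assistance of the correlation `D`, i.e. the
maximum over deterministic protocols `(e, f, g, h)`. -/
def SuccD {X Y R S P Q : Type*} [Fintype X] [Fintype Y] [Fintype R] [Fintype S]
    [Fintype P] [Fintype Q] [DecidableEq P] [DecidableEq Q] [DecidableEq Y]
    [Nonempty X] [Nonempty R] [Nonempty S]
    (N : X → Y → ℝ) (D : R → S → P → Q → ℝ) : ℝ :=
  ⨆ π : (Bool → R) × (Bool → P → X) × (Y → S) × (Y → Q → Bool),
    (1 / 2) * ∑ a : Bool, ∑ p, ∑ y, ∑ q,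
      D (π.1 a) (π.2.2.1 y) p q * N (π.2.1 a p) y *
        (if π.2.2.2 y q = a then 1 else 0)

/-- The non-signaling assisted one-shot success probability: the supremum of
`SuccD N D` over all non-signaling correlations `D` (over all finite alphabets). -/
def SuccNS {X Y : Type*} [Fintype X] [Fintype Y] [DecidableEq Y] [Nonempty X]
    (N : X → Y → ℝ) : ℝ :=
  sSup { v : ℝ | ∃ (nR nS nP nQ : ℕ)
    (D : Fin (nR + 1) → Fin (nS + 1) → Fin nP → Fin nQ → ℝ),
    IsCorrelation D ∧ NonSignaling D ∧ v = SuccD N D }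

/-- Local-deterministic correlations. -/
def IsLocalDet {R S P Q : Type*} [DecidableEq P] [DecidableEq Q]
    (D : R → S → P → Q → ℝ) : Prop :=
  ∃ (φ : R → P) (ψ : S → Q), ∀ r s p q,
    D r s p q = (if p = φ r then 1 else 0) * (if q = ψ s then 1 else 0)

/-- Local correlations: finite convex combinations of local-deterministic ones. -/
def IsLocal {R S P Q : Type*} [DecidableEq P] [DecidableEq Q]
    (D : R → S → P → Q → ℝ) : Prop :=
  ∃ (n : ℕ) (w : Fin n → ℝ) (L : Fin n → R → S → P → Q → ℝ),
    (∀ i, 0 ≤ w i) ∧ (∑ i, w i = 1) ∧ (∀ i, IsLocalDet (L i)) ∧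
      ∀ r s p q, D r s p q = ∑ i, w i * L i r s p q

/-- The local fraction of a correlation. -/
def locFrac {R S P Q : Type*} [Fintype P] [Fintype Q] [DecidableEq P] [DecidableEq Q]
    (D : R → S → P → Q → ℝ) : ℝ :=
  sSup { α : ℝ | 0 ≤ α ∧ α ≤ 1 ∧ ∃ L F : R → S → P → Q → ℝ,
    IsLocal L ∧ IsCorrelation F ∧ NonSignaling F ∧
      ∀ r s p q, D r s p q = α * L r s p q + (1 - α) * F r s p q }

/-- Binary quantum correlations: all four alphabets are `Bool`, and the
correlation arises from local POVM measurements on a shared bipartite state. -/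
def IsBinaryQuantum (D : Bool → Bool → Bool → Bool → ℝ) : Prop :=
  ∃ (nA nB : ℕ)
    (Λ : Matrix (Fin (nA + 1) × Fin (nB + 1)) (Fin (nA + 1) × Fin (nB + 1)) ℂ)
    (A : Bool → Bool → Matrix (Fin (nA + 1)) (Fin (nA + 1)) ℂ)
    (B : Bool → Bool → Matrix (Fin (nB + 1)) (Fin (nB + 1)) ℂ),
    Λ.PosSemidef ∧ Λ.trace = 1 ∧
    (∀ r p, (A r p).PosSemidef) ∧ (∀ r, A r false + A r true = 1) ∧
    (∀ s q, (B s q).PosSemidef) ∧ (∀ s, B s false + B s true = 1) ∧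
    ∀ r s p q, (D r s p q : ℂ) = ((A r p ⊗ₖ B s q) * Λ).trace

/-- The binary-quantum assisted one-shot success probability. -/
def SuccQb {X Y : Type*} [Fintype X] [Fintype Y] [DecidableEq Y] [Nonempty X]
    (N : X → Y → ℝ) : ℝ :=
  sSup { v : ℝ | ∃ D : Bool → Bool → Bool → Bool → ℝ,
    IsBinaryQuantum D ∧ v = SuccD N D }

/-- The radius of a finite family of operators on `ℂ^n`, with respect to the
`ℓ²` operator norm: the minimum over Hermitian `C` of `max_i ‖H i − C‖`. -/
def matRad {n : ℕ} {I : Type*} [Fintype I] [Nonempty I]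
    (H : I → Matrix (Fin n) (Fin n) ℂ) : ℝ :=
  ⨅ C : { C : Matrix (Fin n) (Fin n) ℂ // C.IsHermitian }, ⨆ i, ‖H i - C.1‖

/-- The `n`-dimensional entanglement-assisted one-shot success probability. -/
def SuccQn {X Y : Type*} [Fintype X] [Fintype Y] (n : ℕ) (N : X → Y → ℝ) : ℝ :=
  sSup { v : ℝ | ∃ (Λ : Matrix (Fin n × Fin n) (Fin n × Fin n) ℂ)
      (A : Bool → X → Matrix (Fin n) (Fin n) ℂ)
      (B : Y → Bool → Matrix (Fin n) (Fin n) ℂ),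
      Λ.PosSemidef ∧ Λ.trace = 1 ∧
      (∀ a x, (A a x).PosSemidef) ∧ (∀ a, ∑ x, A a x = 1) ∧
      (∀ y b, (B y b).PosSemidef) ∧ (∀ y, B y false + B y true = 1) ∧
      v = (1 / 2) * ∑ a : Bool, ∑ x, ∑ y,
            N x y * (((A a x ⊗ₖ B y a) * Λ).trace).re }

/-- The channel of Prevedel et al. -/
def Mchan : Fin 4 → Fin 6 → ℝ :=
  ![![1/3, 0, 1/3, 0, 1/3, 0],
    ![1/3, 0, 0, 1/3, 0, 1/3],
    ![0, 1/3, 1/3, 0, 0, 1/3],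
    ![0, 1/3, 0, 1/3, 1/3, 0]]

/-- The mod-2 inner product of the binary representations of `i` and `j`
(restricted to the first `s` bits), as a `Bool` (`true` = 1). -/
def binIP (s i j : ℕ) : Bool :=
  decide ((((Finset.range s).filter fun k => i.testBit k ∧ j.testBit k).card) % 2 = 1)

/-- The output distributions `ℓ_i` of the channel `T`:
`ℓ_i (j, t) = (2^s − 1)⁻¹ · [b_i · b_j = t]`, where the output pair `(j, t)`
with `j ∈ {1, …, 2^s − 1}` is encoded as `(j', t) : Fin (2^s - 1) × Bool`
with `j = j' + 1`, and `t = true` encodes `1`. -/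
def Tchan (s : ℕ) : Fin (2 ^ s) → Fin (2 ^ s - 1) × Bool → ℝ :=
  fun i jt =>
    if binIP s i.val (jt.1.val + 1) = jt.2 then ((2 : ℝ) ^ s - 1)⁻¹ else 0

/-!
Bob reads the label `j` and the bit `t = b_i · b_j` off the channel output. If Alice feeds her
bit `r` into the non-signaling box `q = r ⊕ b_p · b_j` and sends its uniformly random output `p`
through the channel, Bob, entering `j` into the box, recovers `r = t ⊕ q`. The box is
non-signaling because `p ↦ b_p · b_j` is balanced for `j ≠ 0`.

Unassisted, the best decoder is maximum likelihood between two inputs `i ≠ i'`, and exactly half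
of all `2^s` labels `j` separate `ℓ_i` from `ℓ_{i'}`, so `Succ(T) = 1/2 + 2^s / (4 (2^s − 1))`.
-/
theorem binIP_eq_decide (s i j : ℕ) :
    binIP s i j =
      decide (∑ k ∈ range s, (if i.testBit k ∧ j.testBit k then 1 else 0 : ZMod 2) = 1) := by
  simp only [binIP, ← Finset.natCast_card_filter, ZMod.natCast_eq_one_iff_odd, Nat.odd_iff]

theorem binIP_comm (s i j : ℕ) : binIP s i j = binIP s j i := by
  simp only [binIP, and_comm]

theorem binIP_zero_right (s i : ℕ) : binIP s i 0 = false := by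
  simp [binIP]

theorem binIP_xor_left (s a b j : ℕ) :
    binIP s (a ^^^ b) j = xor (binIP s a j) (binIP s b j) := by
  have hxor : ∀ u v : ZMod 2, decide (u + v = 1) = xor (decide (u = 1)) (decide (v = 1)) := by
    decide
  simp only [binIP_eq_decide, ← hxor, ← Finset.sum_add_distrib, Nat.testBit_xor]
  congr 2
  refine Finset.sum_congr rfl fun k _ => ?_
  cases a.testBit k <;> cases b.testBit k <;> cases j.testBit k <;> decide

theorem binIP_two_pow_left {s k : ℕ} (hk : k < s) (j : ℕ) : binIP s (2 ^ k) j = j.testBit k := by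
  simp only [binIP_eq_decide, Nat.testBit_two_pow, decide_eq_true_eq, ite_and,
    Finset.sum_ite_eq, Finset.mem_range, hk, if_true]
  cases j.testBit k <;> decide

theorem two_mul_card_filter_binIP {s d : ℕ} (hd0 : d ≠ 0) (hd : d < 2 ^ s) (c : Bool) :
    2 * #{i ∈ range (2 ^ s) | binIP s i d = c} = 2 ^ s := by
  obtain ⟨k, hk, -⟩ := Nat.exists_most_significant_bit hd0
  have hks : k < s := (Nat.pow_lt_pow_iff_right (by norm_num)).1 <|
    (Nat.ge_two_pow_of_testBit hk).trans_lt hd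
  -- Flipping bit `k` of `i` flips `b_i · b_d`, because bit `k` of `d` is set.
  have hflip : ∀ i, binIP s (i ^^^ 2 ^ k) d = !binIP s i d := by
    intro i
    rw [binIP_xor_left, binIP_two_pow_left hks, hk, Bool.xor_true]
  have hinv : ∀ i, i ^^^ 2 ^ k ^^^ 2 ^ k = i := fun i => by
    rw [Nat.xor_assoc, Nat.xor_self, Nat.xor_zero]
  have hlt : ∀ i, i < 2 ^ s → i ^^^ 2 ^ k < 2 ^ s := fun i hi =>
    Nat.xor_lt_two_pow hi (Nat.pow_lt_pow_right (by norm_num) hks)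
  have hswap : #{i ∈ range (2 ^ s) | binIP s i d = c} =
      #{i ∈ range (2 ^ s) | ¬binIP s i d = c} := by
    apply Finset.card_nbij' (· ^^^ 2 ^ k) (· ^^^ 2 ^ k)
    all_goals intro i; grind
  have htotal := Finset.card_filter_add_card_filter_not (s := range (2 ^ s)) (binIP s · d = c)
  rw [Finset.card_range] at htotal
  omega

theorem sum_range_ite_binIP {s d : ℕ} (hd0 : d ≠ 0) (hd : d < 2 ^ s) (c : Bool) (v : ℝ) :
    ∑ i ∈ range (2 ^ s), (if binIP s i d = c then v else 0) = 2 ^ s / 2 * v := by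
  have hcard : (#{i ∈ range (2 ^ s) | binIP s i d = c} : ℝ) = 2 ^ s / 2 := by
    rw [eq_div_iff two_ne_zero, mul_comm]
    exact_mod_cast two_mul_card_filter_binIP hd0 hd c
  rw [← Finset.sum_filter, Finset.sum_const, nsmul_eq_mul, hcard]

theorem sum_fin_ite_binIP_succ {s d : ℕ} (hd0 : d ≠ 0) (hd : d < 2 ^ s) (v : ℝ) :
    ∑ j : Fin (2 ^ s - 1), (if binIP s d (j + 1) then v else 0) = 2 ^ s / 2 * v := by
  have hsucc := Finset.sum_range_succ' (fun j => if binIP s j d then v else 0) (2 ^ s - 1)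
  rw [Nat.sub_add_cancel Nat.one_le_two_pow, sum_range_ite_binIP hd0 hd true, binIP_comm,
    binIP_zero_right] at hsucc
  simp only [binIP_comm s d,
    Fin.sum_univ_eq_sum_range (fun j => if binIP s (j + 1) d then v else 0)]
  simpa using hsucc.symm

section Protocols

variable {X Y R S P Q : Type*} [Fintype Y] [Fintype P] [Fintype Q]
  {N : X → Y → ℝ} {D : R → S → P → Q → ℝ}

theorem sum_correlation_mul_channel [Nonempty S] (hN : IsChannel N) (hD : IsCorrelation D)
    (hNS : NonSignaling D) (r : R) (f : P → X) (g : Y → S) :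
    ∑ p, ∑ y, ∑ q, D r (g y) p q * N (f p) y = 1 := by
  obtain ⟨s₀⟩ := ‹Nonempty S›
  calc ∑ p, ∑ y, ∑ q, D r (g y) p q * N (f p) y
      = ∑ p, ∑ y, (∑ q, D r s₀ p q) * N (f p) y := by
        refine Finset.sum_congr rfl fun p _ => Finset.sum_congr rfl fun y _ => ?_
        rw [← Finset.sum_mul, hNS.1 r p (g y) s₀]
    _ = ∑ p, ∑ q, D r s₀ p q := by simp only [← Finset.mul_sum, hN.2, mul_one]
    _ = 1 := hD.2 r s₀

theorem sum_protocol_le_one [Nonempty S] (hN : IsChannel N) (hD : IsCorrelation D)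
    (hNS : NonSignaling D) (r : R) (f : P → X) (g : Y → S) (h : Y → Q → Bool) (a : Bool) :
    ∑ p, ∑ y, ∑ q, D r (g y) p q * N (f p) y * (if h y q = a then 1 else 0) ≤ 1 := by
  refine (Finset.sum_le_sum fun p _ => Finset.sum_le_sum fun y _ => Finset.sum_le_sum fun q _ =>
    ?_).trans_eq (sum_correlation_mul_channel hN hD hNS r f g)
  exact mul_le_of_le_one_right (mul_nonneg (hD.1 _ _ _ _) (hN.1 _ _)) (by split_ifs <;> norm_num)

theorem sum_protocol_eq_one [Nonempty S] (hN : IsChannel N) (hD : IsCorrelation D)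
    (hNS : NonSignaling D) (r : R) (f : P → X) (g : Y → S) (h : Y → Q → Bool) (a : Bool)
    (hcorrect : ∀ p y q, D r (g y) p q * N (f p) y ≠ 0 → h y q = a) :
    ∑ p, ∑ y, ∑ q, D r (g y) p q * N (f p) y * (if h y q = a then 1 else 0) = 1 := by
  refine (Finset.sum_congr rfl fun p _ => Finset.sum_congr rfl fun y _ =>
    Finset.sum_congr rfl fun q _ => ?_).trans (sum_correlation_mul_channel hN hD hNS r f g)
  by_cases hzero : D r (g y) p q * N (f p) y = 0
  · simp [hzero]
  · simp [hcorrect p y q hzero]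

variable [Fintype X] [Fintype R] [Fintype S] [DecidableEq P] [DecidableEq Q] [DecidableEq Y]
  [Nonempty X] [Nonempty R] [Nonempty S]

theorem succD_le_one (hN : IsChannel N) (hD : IsCorrelation D) (hNS : NonSignaling D) :
    SuccD N D ≤ 1 := by
  refine ciSup_le fun ⟨e, f, g, h⟩ => ?_
  have hle := fun a => sum_protocol_le_one hN hD hNS (e a) (f a) g h a
  rw [Fintype.sum_bool]
  linarith [hle true, hle false]

theorem succD_eq_one_of_correct (hN : IsChannel N) (hD : IsCorrelation D) (hNS : NonSignaling D)
    (e : Bool → R) (f : Bool → P → X) (g : Y → S) (h : Y → Q → Bool)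
    (hcorrect : ∀ a p y q, D (e a) (g y) p q * N (f a p) y ≠ 0 → h y q = a) :
    SuccD N D = 1 := by
  refine le_antisymm (succD_le_one hN hD hNS) ?_
  have heq := fun a => sum_protocol_eq_one hN hD hNS (e a) (f a) g h a (hcorrect a)
  refine le_ciSup_of_le (Set.finite_range _).bddAbove (e, f, g, h) ?_
  simp only [Fintype.sum_bool, heq]
  norm_num

end Protocols

theorem succNS_le_one {X Y : Type*} [Fintype X] [Fintype Y] [DecidableEq Y] [Nonempty X]
    {N : X → Y → ℝ} (hN : IsChannel N) : SuccNS N ≤ 1 :=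
  Real.sSup_le (by rintro _ ⟨nR, nS, nP, nQ, D, hD, hNS, rfl⟩; exact succD_le_one hN hD hNS)
    zero_le_one

theorem succD_le_succNS {X Y : Type*} [Fintype X] [Fintype Y] [DecidableEq Y] [Nonempty X]
    {N : X → Y → ℝ} (hN : IsChannel N) {nR nS nP nQ : ℕ}
    {D : Fin (nR + 1) → Fin (nS + 1) → Fin nP → Fin nQ → ℝ}
    (hD : IsCorrelation D) (hNS : NonSignaling D) : SuccD N D ≤ SuccNS N :=
  le_csSup ⟨1, by rintro _ ⟨_, _, _, _, D', hD', hNS', rfl⟩; exact succD_le_one hN hD' hNS'⟩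
    ⟨nR, nS, nP, nQ, D, hD, hNS, rfl⟩

theorem succ_eq_iSup_sum_max {X Y : Type*} [Fintype X] [Fintype Y] [Nonempty X]
    (N : X → Y → ℝ) :
    Succ N = ⨆ x : X × X, 1 / 2 * ∑ y, max (N x.1 y) (N x.2 y) := by
  refine le_antisymm (ciSup_le fun ⟨x₀, x₁, g⟩ => ?_) (ciSup_le fun ⟨x₀, x₁⟩ => ?_)
  · refine le_ciSup_of_le (Set.finite_range _).bddAbove (x₀, x₁) ?_
    rw [← mul_add, ← Finset.sum_add_distrib]
    gcongr with y
    cases hg : g y <;> simp [hg]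
  · refine le_ciSup_of_le (Set.finite_range _).bddAbove
      (x₀, x₁, fun y => decide (N x₀ y < N x₁ y)) (le_of_eq ?_)
    rw [← mul_add, ← Finset.sum_add_distrib]
    refine congrArg _ (Finset.sum_congr rfl fun y _ => ?_)
    by_cases hlt : N x₀ y < N x₁ y
    · simp [hlt, max_eq_right hlt.le]
    · simp [hlt, max_eq_left (not_lt.1 hlt)]

theorem tchan_isChannel {s : ℕ} (hs : 1 ≤ s) : IsChannel (Tchan s) := by
  have hpos : (0 : ℝ) < 2 ^ s - 1 := sub_pos.2 (one_lt_pow₀ one_lt_two (by omega))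
  refine ⟨fun i y => by unfold Tchan; positivity, fun i => ?_⟩
  have hpair : ∀ j : Fin (2 ^ s - 1), ∑ t, Tchan s i (j, t) = ((2 : ℝ) ^ s - 1)⁻¹ := fun j => by
    cases h : binIP s i (j + 1) <;> simp [Tchan, h]
  rw [Fintype.sum_prod_type, Fintype.sum_congr _ _ hpair, Finset.sum_const, Finset.card_univ,
    Fintype.card_fin, nsmul_eq_mul, Nat.cast_sub Nat.one_le_two_pow]
  push_cast
  exact mul_inv_cancel₀ hpos.ne'

theorem sum_max_tchan {s : ℕ} {x₀ x₁ : Fin (2 ^ s)} (hne : x₀ ≠ x₁) :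
    ∑ y, max (Tchan s x₀ y) (Tchan s x₁ y) = 1 + 2 ^ s / 2 * ((2 : ℝ) ^ s - 1)⁻¹ := by
  have hc : 0 ≤ ((2 : ℝ) ^ s - 1)⁻¹ := inv_nonneg.2 (sub_nonneg.2 (one_le_pow₀ one_le_two))
  have hd0 : (x₀ : ℕ) ^^^ x₁ ≠ 0 := fun h => hne (Fin.ext (xor_eq_zero_iff.1 h))
  have hd : (x₀ : ℕ) ^^^ x₁ < 2 ^ s := Nat.xor_lt_two_pow x₀.2 x₁.2
  have hgt : (1 : ℝ) < 2 ^ s := by exact_mod_cast (show 1 < 2 ^ s by omega)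
  have hpair : ∀ j : Fin (2 ^ s - 1), ∑ t, max (Tchan s x₀ (j, t)) (Tchan s x₁ (j, t)) =
      ((2 : ℝ) ^ s - 1)⁻¹ +
        if binIP s (x₀ ^^^ x₁) (j + 1) then ((2 : ℝ) ^ s - 1)⁻¹ else 0 := fun j => by
    rw [binIP_xor_left]
    cases h₀ : binIP s x₀ (j + 1) <;> cases h₁ : binIP s x₁ (j + 1) <;>
      simp [Tchan, h₀, h₁, max_eq_left hc, max_eq_right hc]
  rw [Fintype.sum_prod_type, Fintype.sum_congr _ _ hpair, Finset.sum_add_distrib,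
    sum_fin_ite_binIP_succ hd0 hd, Finset.sum_const, Finset.card_univ, Fintype.card_fin,
    nsmul_eq_mul, Nat.cast_sub Nat.one_le_two_pow]
  push_cast
  rw [mul_inv_cancel₀ (sub_ne_zero.2 hgt.ne')]

theorem succ_tchan {s : ℕ} (hs : 1 ≤ s) :
    Succ (Tchan s) = 1 / 2 * (1 + 2 ^ s / 2 * ((2 : ℝ) ^ s - 1)⁻¹) := by
  have htwo : 2 ≤ 2 ^ s := Nat.le_self_pow (by omega) 2
  rw [succ_eq_iSup_sum_max]
  refine le_antisymm (ciSup_le fun ⟨x₀, x₁⟩ => ?_) ?_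
  · by_cases hx : x₀ = x₁
    · subst hx
      simp only [max_self, (tchan_isChannel hs).2]
      have hc : (0 : ℝ) ≤ ((2 : ℝ) ^ s - 1)⁻¹ :=
        inv_nonneg.2 (sub_nonneg.2 (one_le_pow₀ one_le_two))
      have : (0 : ℝ) ≤ 2 ^ s / 2 * ((2 : ℝ) ^ s - 1)⁻¹ := by positivity
      linarith
    · rw [sum_max_tchan hx]
  · refine le_ciSup_of_le (Set.finite_range _).bddAbove (⟨0, by omega⟩, ⟨1, by omega⟩) ?_
    rw [sum_max_tchan (by simp [Fin.ext_iff])]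

/-- Alice inputs her bit `r` and outputs a uniform `p`; Bob inputs `j`, standing for the
channel label `j + 1`, and outputs `q = r ⊕ b_p · b_{j+1}`. -/
def innerProductBox (s : ℕ) : Fin 2 → Fin (2 ^ s - 2 + 1) → Fin (2 ^ s) → Fin 2 → ℝ :=
  fun r j p q =>
    if xor (binIP s p (j + 1)) (finTwoEquiv r) = finTwoEquiv q then ((2 : ℝ) ^ s)⁻¹ else 0

theorem sum_ite_finTwoEquiv (b : Bool) (v : ℝ) :
    ∑ q : Fin 2, (if b = finTwoEquiv q then v else 0) = v := by
  rw [Fin.sum_univ_two]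
  cases b <;> simp [finTwoEquiv]

theorem innerProductBox_isCorrelation (s : ℕ) : IsCorrelation (innerProductBox s) := by
  refine ⟨fun r j p q => by unfold innerProductBox; positivity, fun r j => ?_⟩
  simp only [innerProductBox, sum_ite_finTwoEquiv, Finset.sum_const, Finset.card_univ,
    Fintype.card_fin, nsmul_eq_mul]
  push_cast
  exact mul_inv_cancel₀ (by positivity)

theorem innerProductBox_nonSignaling {s : ℕ} (hs : 1 ≤ s) :
    NonSignaling (innerProductBox s) := by
  refine ⟨fun r p j j' => by simp only [innerProductBox, sum_ite_finTwoEquiv], fun j q r r' => ?_⟩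
  have htwo : 2 ≤ 2 ^ s := Nat.le_self_pow (by omega) 2
  have hbob : ∀ r, ∑ p, innerProductBox s r j p q = 2 ^ s / 2 * ((2 : ℝ) ^ s)⁻¹ := fun r => by
    have hxor : ∀ b c d : Bool, (xor b c = d) = (b = xor d c) := by decide
    simp only [innerProductBox, hxor]
    rw [Fin.sum_univ_eq_sum_range (fun p => if binIP s p (j + 1) = _ then _ else 0)]
    exact sum_range_ite_binIP (Nat.succ_ne_zero _) (by omega) _ _
  rw [hbob, hbob]

theorem succD_tchan_innerProductBox {s : ℕ} (hs : 1 ≤ s) :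
    SuccD (Tchan s) (innerProductBox s) = 1 := by
  have htwo : 2 ≤ 2 ^ s := Nat.le_self_pow (by omega) 2
  refine succD_eq_one_of_correct (tchan_isChannel hs) (innerProductBox_isCorrelation s)
    (innerProductBox_nonSignaling hs) finTwoEquiv.symm (fun _ p => p)
    (fun y => ⟨y.1, by omega⟩) (fun y q => xor y.2 (finTwoEquiv q)) ?_
  rintro a p ⟨j, t⟩ q hne
  obtain ⟨hbox, hchan⟩ := mul_ne_zero_iff.1 hne
  simp only [innerProductBox, Tchan, ne_eq, ite_eq_right_iff, not_forall] at hbox hchan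
  obtain ⟨hq, -⟩ := hbox
  obtain ⟨ht, -⟩ := hchan
  simp [← hq, ← ht]

/-- For the channel `T`: with non-signaling assistance, one bit can be sent
perfectly, `Succ_NS(T) = 1`, and `T` achieves equality in the bound
`Succ_NS(N) − 1/2 ≤ (2 − 2/r)(Succ(N) − 1/2)` with `r = 2^s`. -/
theorem tchan_succNS_eq_one (s : ℕ) (hs : 1 ≤ s) :
    SuccNS (Tchan s) = 1 ∧
      SuccNS (Tchan s) - 1 / 2 =
        (2 - 2 / (2 : ℝ) ^ s) * (Succ (Tchan s) - 1 / 2) := by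
  have hNS : SuccNS (Tchan s) = 1 :=
    le_antisymm (succNS_le_one (tchan_isChannel hs))
      ((succD_tchan_innerProductBox hs).symm.trans_le
        (succD_le_succNS (tchan_isChannel hs) (innerProductBox_isCorrelation s)
          (innerProductBox_nonSignaling hs)))
  refine ⟨hNS, ?_⟩
  have hgt : (1 : ℝ) < 2 ^ s := one_lt_pow₀ one_lt_two (by omega)
  rw [hNS, succ_tchan hs]
  field_simp [(sub_pos.2 hgt).ne']
  ring

end
end

section
/- Let X be a finite set, n ≥ 1, and let {ρ_0^x}_{x∈X} and {ρ_1^x}_{x∈X} be families of positive semidefinite n×n complex matrices satisfying Σ_{x∈X} ρ_0^x = Σ_{x∈X} ρ_1^x and Tr(Σ_{x∈X} ρ_0^x) = 1. Then there exist a positive integer m, a density operator Λ on ℂ^m ⊗ ℂ^n (positive semidefinite with trace 1), and POVMs {A_0^x}_{x∈X} and {A_1^x}_{x∈X} on ℂ^m (positive semidefinite matrices with Σ_{x∈X} A_a^x = I for each a ∈ {0,1}) such that ρ_a^x = Tr_A[ (A_a^x ⊗ I_n)·Λ ] for all a ∈ {0,1} and x ∈ X. -/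
open scoped Matrix Kronecker BigOperators Matrix.Norms.L2Operator ComplexOrder
open Matrix Finset

noncomputable section

/-!
Put `σ = ∑ₓ ρ_a^x` and `S = σ^{1/2}`. The pure state `Λ = |vec S⟩⟨vec S|` purifies `σ`, and
`Tr_A[(Aᵀ ⊗ I) Λ] = S A S`, so it suffices to write `ρ_a^x = S E_a^x S` for a POVM `{E_a^x}ₓ`.
Take `E_a^x = T ρ_a^x T`, where `T` is the pseudo-inverse of `S`, and add the projection `1 - S T`
onto `ker σ` to one of them. Since `0 ≤ ρ_a^x ≤ σ`, each `ρ_a^x` vanishes on `ker σ`, which gives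
`S T ρ_a^x T S = ρ_a^x`.
-/

namespace Matrix

theorem sum_vecMulVec_vec_star_vec_apply {m n R : Type*} [Fintype m] [NonUnitalSemiring R]
    [StarRing R] (X Y : Matrix n m R) (i j : n) :
    ∑ k, vecMulVec (vec X) (star (vec Y)) (k, i) (k, j) = (X * Yᴴ) i j := by
  simp [vecMulVec_apply, mul_apply]

variable {𝕜 n : Type*} [RCLike 𝕜] [Fintype n]

theorem PosSemidef.mul_eq_zero_of_sub_posSemidef {m : Type*} {A B : Matrix n n 𝕜}
    {C : Matrix n m 𝕜} (hA : A.PosSemidef) (hBA : (B - A).PosSemidef) (hBC : B * C = 0) :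
    A * C = 0 := by
  ext i j
  set w : n → 𝕜 := fun k => C k j
  have hBw : B *ᵥ w = 0 := funext fun k => congrFun (congrFun hBC k) j
  have hsum : star w ⬝ᵥ A *ᵥ w + star w ⬝ᵥ (B - A) *ᵥ w = 0 := by
    rw [← dotProduct_add, ← add_mulVec, add_sub_cancel, hBw, dotProduct_zero]
  have hAw : star w ⬝ᵥ A *ᵥ w = 0 :=
    (add_eq_zero_iff_of_nonneg (hA.dotProduct_mulVec_nonneg w)
      (hBA.dotProduct_mulVec_nonneg w)).mp hsum |>.1
  exact congrFun ((hA.dotProduct_mulVec_zero_iff w).mp hAw) i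

theorem _root_.IsStarProjection.posSemidef {P : Matrix n n 𝕜} (hP : IsStarProjection P) :
    P.PosSemidef := by
  have hPh : P.IsHermitian := hP.isSelfAdjoint
  simpa only [hPh.eq, hP.isIdempotentElem.eq] using posSemidef_conjTranspose_mul_self P

variable [DecidableEq n]

theorem finite_spectrum_real (A : Matrix n n 𝕜) : (spectrum ℝ A).Finite := by
  rw [← spectrum.preimage_algebraMap 𝕜]
  exact (finite_spectrum A).preimage (algebraMap ℝ 𝕜).injective.injOn

-- Every function is continuous on a finite spectrum, so no continuity hypotheses are needed.
theorem cfc_mul_cfc (f g : ℝ → ℝ) (A : Matrix n n 𝕜) :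
    cfc f A * cfc g A = cfc (fun t => f t * g t) A :=
  (cfc_mul f g A ((finite_spectrum_real A).continuousOn f)
    ((finite_spectrum_real A).continuousOn g)).symm

theorem PosSemidef.cfc_sqrt_mul_self {A : Matrix n n 𝕜} (hA : A.PosSemidef) :
    cfc Real.sqrt A * cfc Real.sqrt A = A := by
  rw [cfc_mul_cfc]
  conv_rhs => rw [← cfc_id' ℝ A hA.isHermitian]
  refine cfc_congr fun t ht => Real.mul_self_sqrt ?_
  rw [hA.isHermitian.spectrum_real_eq_range_eigenvalues] at ht
  obtain ⟨i, rfl⟩ := ht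
  exact hA.eigenvalues_nonneg i

theorem cfc_sqrt_mul_cfc_inv_sqrt_mul_cfc_sqrt (A : Matrix n n 𝕜) :
    cfc Real.sqrt A * cfc (fun t => (Real.sqrt t)⁻¹) A * cfc Real.sqrt A = cfc Real.sqrt A := by
  rw [cfc_mul_cfc, cfc_mul_cfc]
  exact cfc_congr fun t _ => mul_inv_mul_cancel _

theorem isStarProjection_cfc_sqrt_mul_cfc_inv_sqrt (A : Matrix n n 𝕜) :
    IsStarProjection (cfc Real.sqrt A * cfc (fun t => (Real.sqrt t)⁻¹) A) := by
  rw [cfc_mul_cfc]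
  refine ⟨?_, cfc_predicate _ A⟩
  rw [IsIdempotentElem, cfc_mul_cfc]
  refine cfc_congr fun t _ => ?_
  by_cases ht : Real.sqrt t = 0 <;> simp [ht]

theorem PosSemidef.projection_mul_mul_projection_eq_self {P ρ σ : Matrix n n 𝕜}
    (hP : IsStarProjection P) (hρ : ρ.PosSemidef) (hσρ : (σ - ρ).PosSemidef)
    (hσP : σ * (1 - P) = 0) : P * ρ * P = ρ := by
  have hρP : ρ * P = ρ := by
    have := hρ.mul_eq_zero_of_sub_posSemidef hσρ hσP
    rwa [mul_sub, mul_one, sub_eq_zero, eq_comm] at this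
  have hPρ : P * ρ = ρ := by
    have hPh : P.IsHermitian := hP.isSelfAdjoint
    simpa only [conjTranspose_mul, hPh.eq, hρ.isHermitian.eq] using congrArg (·ᴴ) hρP
  rw [hPρ, hρP]

theorem exists_posSemidef_sum_eq_one_and_cfc_sqrt_conj {ι : Type*} [Fintype ι] [Nonempty ι]
    {ρ : ι → Matrix n n 𝕜} (hρ : ∀ i, (ρ i).PosSemidef) :
    ∃ E : ι → Matrix n n 𝕜, (∀ i, (E i).PosSemidef) ∧ ∑ i, E i = 1 ∧
      ∀ i, cfc Real.sqrt (∑ i, ρ i) * E i * cfc Real.sqrt (∑ i, ρ i) = ρ i := by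
  classical
  set σ := ∑ i, ρ i
  set S := cfc Real.sqrt σ
  -- Since `0⁻¹ = 0`, `T` is the Moore–Penrose pseudo-inverse of `S`.
  set T := cfc (fun t => (Real.sqrt t)⁻¹) σ
  set P := S * T
  have hP : IsStarProjection P := isStarProjection_cfc_sqrt_mul_cfc_inv_sqrt σ
  have hT : T.IsHermitian := cfc_predicate (R := ℝ) _ σ
  have hTS : T * S = P := (cfc_commute_cfc _ _ σ).eq
  have hSS : S * S = σ := (posSemidef_sum _ fun i _ => hρ i).cfc_sqrt_mul_self
  have hSQ : S * (1 - P) = 0 := by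
    rw [mul_sub, mul_one, ← hTS, ← mul_assoc, cfc_sqrt_mul_cfc_inv_sqrt_mul_cfc_sqrt, sub_self]
  have hσQ : σ * (1 - P) = 0 := by rw [← hSS, mul_assoc, hSQ, mul_zero]
  have hPρP : ∀ i, P * ρ i * P = ρ i := fun i => by
    refine (hρ i).projection_mul_mul_projection_eq_self hP ?_ hσQ
    rw [← sum_erase_eq_sub (mem_univ i)]
    exact posSemidef_sum _ fun j _ => hρ j
  obtain ⟨i₀⟩ := ‹Nonempty ι›
  refine ⟨fun i => T * ρ i * T + (Pi.single i₀ (1 - P) : ι → Matrix n n 𝕜) i,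
    fun i => ?_, ?_, fun i => ?_⟩
  · refine PosSemidef.add (by simpa only [hT.eq] using (hρ i).mul_mul_conjTranspose_same T) ?_
    rcases eq_or_ne i i₀ with rfl | hi
    · simpa using hP.one_sub.posSemidef
    · simpa [hi] using PosSemidef.zero
  · have hTσT : T * σ * T = P := by
      rw [← hSS, ← hP.isIdempotentElem.eq]
      simp only [← hTS, P, mul_assoc]
    simp only [sum_add_distrib, ← sum_mul, ← mul_sum, sum_pi_single', mem_univ, if_true]
    rw [hTσT, add_sub_cancel]
  · have hSTρTS : S * (T * ρ i * T) * S = P * ρ i * P :=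
      calc S * (T * ρ i * T) * S = S * T * ρ i * (T * S) := by simp only [mul_assoc]
        _ = P * ρ i * P := by rw [hTS]
    rw [mul_add, add_mul, hSTρTS, hPρP]
    rcases eq_or_ne i i₀ with rfl | hi
    · simp [hSQ]
    · simp [hi]

end Matrix

/-- Any two families `{ρ_0^x}, {ρ_1^x}` of positive semidefinite operators on
`ℂ^n` with `∑_x ρ_0^x = ∑_x ρ_1^x` and `Tr(∑_x ρ_0^x) = 1` can be realized as
`ρ_a^x = Tr_A[(A_a^x ⊗ I) Λ]` for some shared density operator `Λ` on
`ℂ^m ⊗ ℂ^n` and POVMs `{A_a^x}_x` on `ℂ^m`. -/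
theorem steering_realization {X : Type*} [Fintype X] (n : ℕ)
    (ρ : Bool → X → Matrix (Fin n) (Fin n) ℂ)
    (hpsd : ∀ a x, (ρ a x).PosSemidef)
    (hsum : (∑ x, ρ false x) = ∑ x, ρ true x)
    (htr : (∑ x, ρ false x).trace = 1) :
    ∃ m : ℕ, 0 < m ∧
      ∃ (Λ : Matrix (Fin m × Fin n) (Fin m × Fin n) ℂ)
        (A : Bool → X → Matrix (Fin m) (Fin m) ℂ),
        Λ.PosSemidef ∧ Λ.trace = 1 ∧
        (∀ a x, (A a x).PosSemidef) ∧ (∀ a, (∑ x, A a x) = 1) ∧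
        ∀ a x i j, ρ a x i j =
          ∑ k, ((A a x ⊗ₖ (1 : Matrix (Fin n) (Fin n) ℂ)) * Λ) (k, i) (k, j) := by
  have hn : 0 < n := Nat.pos_of_ne_zero fun h => by subst h; simp at htr
  have : Nonempty X := by
    by_contra h
    simp [not_nonempty_iff.mp h] at htr
  set σ := ∑ x, ρ false x
  have hσ : ∀ a, ∑ x, ρ a x = σ := by simp [σ, hsum]
  choose E hE_psd hE_sum hE_conj using
    fun a => exists_posSemidef_sum_eq_one_and_cfc_sqrt_conj (hpsd a)
  simp only [hσ] at hE_conj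
  set S := cfc Real.sqrt σ
  have hS : S.IsHermitian := cfc_predicate (R := ℝ) _ σ
  refine ⟨n, hn, vecMulVec (vec S) (star (vec S)), fun a x => (E a x)ᵀ,
    posSemidef_vecMulVec_self_star _, ?_, fun a x => (hE_psd a x).transpose,
    fun a => by rw [← transpose_sum, hE_sum, transpose_one], fun a x i j => ?_⟩
  · have hSS : S * S = σ := (posSemidef_sum _ fun x _ => hpsd false x).cfc_sqrt_mul_self
    rw [trace_vecMulVec, dotProduct_comm, star_vec_dotProduct_vec, hS.eq, hSS, htr]
  · dsimp only
    rw [mul_vecMulVec, kronecker_mulVec_vec, sum_vecMulVec_vec_star_vec_apply, one_mul,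
      transpose_transpose, hS.eq, hE_conj]

end
end
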